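/- Let F be the simplicial complex on five vertices v1,…,v5 whose edge set is the downward closure of {{v1,v2,v3}, {v2,v3,v4}, {v2,v5}, {v3,v5}}. For every ε > 0 there is n0 ∈ ℕ such that for every n ≥ n0, (4/3 − ε)·binom(n,2) ≤ ex(n,F) ≤ (4/3 + ε)·binom(n,2). -/

import Mathlib

open Finset

/-- `E` is the edge set of a simplicial complex: it is closed under taking subsets. -/
def IsComplex {α : Type*} [DecidableEq α] (E : Finset (Finset α)) : Prop :=
  ∀ e ∈ E, ∀ f ⊆ e, f ∈ E

/-- `H` contains a copy of `F`: an injection of the vertices mapping edges to edges. -/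
def HasCopy {α β : Type*} [DecidableEq β]
    (F : Finset (Finset α)) (H : Finset (Finset β)) : Prop :=
  ∃ f : α → β, Function.Injective f ∧ ∀ e ∈ F, e.image f ∈ H

/-- downward closure of a family of sets -/
def dClosure {α : Type*} [DecidableEq α] (S : Finset (Finset α)) : Finset (Finset α) :=
  S.biUnion Finset.powerset

/-- `ex(n,F)`: the extremal number for simplicial complexes -/
noncomputable def exSC {α : Type*} (n : ℕ) (F : Finset (Finset α)) : ℕ :=
  sSup {m | ∃ E : Finset (Finset (Fin n)), IsComplex E ∧ ¬ HasCopy F E ∧ E.card = m}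

/-- `ex^(k)(n,F)`: the extremal number for `k`-uniform hypergraphs -/
noncomputable def exUnif {α : Type*} (k n : ℕ) (F : Finset (Finset α)) : ℕ :=
  sSup {m | ∃ E : Finset (Finset (Fin n)),
    (∀ e ∈ E, e.card = k) ∧ ¬ HasCopy F E ∧ E.card = m}

/-- downward closure of `{{v1,v2,v3},{v2,v3,v4},{v2,v5},{v3,v5}}` with `v1,…,v5 = 0,…,4` -/
def F5 : Finset (Finset (Fin 5)) :=
  dClosure {{0, 1, 2}, {1, 2, 3}, {1, 4}, {2, 4}}


lemma F5_mem_sub {e : Finset (Fin 5)} (he : e ∈ F5) :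
    e ⊆ {0,1,2} ∨ e ⊆ {1,2,3} ∨ e ⊆ {1,4} ∨ e ⊆ {2,4} := by
  simp only [F5, dClosure, mem_biUnion, mem_powerset, mem_insert, mem_singleton] at he
  obtain ⟨g, hg, hsub⟩ := he
  rcases hg with h|h|h|h <;> subst h <;> tauto

lemma mem_F5_012 : ({0,1,2} : Finset (Fin 5)) ∈ F5 := by decide
lemma mem_F5_123 : ({1,2,3} : Finset (Fin 5)) ∈ F5 := by decide

lemma hasCopy_of {n : ℕ} {E : Finset (Finset (Fin n))} (hC : IsComplex E)
    (a u v b c : Fin n)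
    (hau : a ≠ u) (hav : a ≠ v) (hab : a ≠ b) (hac : a ≠ c)
    (huv : u ≠ v) (hub : u ≠ b) (huc : u ≠ c)
    (hvb : v ≠ b) (hvc : v ≠ c) (hbc : b ≠ c)
    (h1 : ({a,u,v} : Finset (Fin n)) ∈ E) (h2 : ({u,v,b} : Finset (Fin n)) ∈ E)
    (h3 : ({u,c} : Finset (Fin n)) ∈ E) (h4 : ({v,c} : Finset (Fin n)) ∈ E) :
    HasCopy F5 E := by
  classical
  let f : Fin 5 → Fin n := fun i =>
    if i = 0 then a else if i = 1 then u else if i = 2 then v else if i = 3 then b else c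
  have hinj : Function.Injective f := by
    intro x y hxy
    fin_cases x <;> fin_cases y <;> simp_all [f]
  refine ⟨f, hinj, ?_⟩
  have i0 : f 0 = a := rfl
  have i1 : f 1 = u := rfl
  have i2 : f 2 = v := rfl
  have i3 : f 3 = b := rfl
  have i4 : f 4 = c := rfl
  have g1 : Finset.image f {0,1,2} = ({a,u,v} : Finset (Fin n)) := by
    simp [Finset.image_insert, i0, i1, i2]
  have g2 : Finset.image f {1,2,3} = ({u,v,b} : Finset (Fin n)) := by
    simp [Finset.image_insert, i1, i2, i3]
  have g3 : Finset.image f {1,4} = ({u,c} : Finset (Fin n)) := by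
    simp [Finset.image_insert, i1, i4]
  have g4 : Finset.image f {2,4} = ({v,c} : Finset (Fin n)) := by
    simp [Finset.image_insert, i2, i4]
  intro e he
  rcases F5_mem_sub he with hs|hs|hs|hs
  · exact hC _ (g1 ▸ h1) _ (g1 ▸ Finset.image_subset_image (f := f) hs)
  · exact hC _ (g2 ▸ h2) _ (g2 ▸ Finset.image_subset_image (f := f) hs)
  · exact hC _ (g3 ▸ h3) _ (g3 ▸ Finset.image_subset_image (f := f) hs)
  · exact hC _ (g4 ▸ h4) _ (g4 ▸ Finset.image_subset_image (f := f) hs)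

-- third vertex helper
lemma third_vertex {n : ℕ} {p t : Finset (Fin n)} (hp : p.card = 2) (ht : t.card = 3)
    (hpt : p ⊆ t) : ∃ x, x ∉ p ∧ t = insert x p := by
  have hs : (t \ p).card = 1 := by
    rw [card_sdiff_of_subset hpt, ht, hp]
  obtain ⟨x, hx⟩ := Finset.card_eq_one.mp hs
  refine ⟨x, ?_, ?_⟩
  · have hxm : x ∈ t \ p := hx ▸ Finset.mem_singleton_self x
    exact (Finset.mem_sdiff.mp hxm).2
  · have : t = p ∪ (t \ p) := by
      rw [Finset.union_sdiff_of_subset hpt]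
    rw [this, hx]
    ext y; simp [or_comm]

-- five distinct elements from a 5-card set
lemma five_elements {n : ℕ} {s : Finset (Fin n)} (hs : s.card = 5) :
    ∃ a u v b c : Fin n, a ≠ u ∧ a ≠ v ∧ a ≠ b ∧ a ≠ c ∧ u ≠ v ∧ u ≠ b ∧ u ≠ c ∧
      v ≠ b ∧ v ≠ c ∧ b ≠ c ∧ a ∈ s ∧ u ∈ s ∧ v ∈ s ∧ b ∈ s ∧ c ∈ s := by
  obtain ⟨a, t1, ha1, rfl, ht1⟩ := Finset.card_eq_succ.mp hs
  obtain ⟨u, t2, hu2, rfl, ht2⟩ := Finset.card_eq_succ.mp ht1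
  obtain ⟨v, b, c, h1, h2, h3, rfl⟩ := Finset.card_eq_three.mp ht2
  simp only [Finset.mem_insert, Finset.mem_singleton, not_or] at ha1 hu2
  refine ⟨a, u, v, b, c, ?_, ?_, ?_, ?_, ?_, ?_, ?_, h1, h2, h3, ?_, ?_, ?_, ?_, ?_⟩ <;>
    simp_all [Finset.mem_insert]

section Upper
variable {n : ℕ} {E : Finset (Finset (Fin n))} (hC : IsComplex E) (hF : ¬ HasCopy F5 E)

include hC hF in
lemma size_le4 : ∀ e ∈ E, e.card ≤ 4 := by
  intro e he
  by_contra hlt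
  push_neg at hlt
  obtain ⟨s, hse, hs5⟩ := Finset.exists_subset_card_eq (by omega : 5 ≤ e.card)
  obtain ⟨a, u, v, b, c, h1,h2,h3,h4,h5,h6,h7,h8,h9,h10, ma,mu,mv,mb,mc⟩ := five_elements hs5
  have hsub : ∀ f : Finset (Fin n), f ⊆ s → f ∈ E := fun f hf => hC e he f (hf.trans hse)
  have k1 : ({a,u,v} : Finset (Fin n)) ⊆ s := by
    simp [Finset.insert_subset_iff, ma, mu, mv]
  have k2 : ({u,v,b} : Finset (Fin n)) ⊆ s := by
    simp [Finset.insert_subset_iff, mu, mv, mb]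
  have k3 : ({u,c} : Finset (Fin n)) ⊆ s := by
    simp [Finset.insert_subset_iff, mu, mc]
  have k4 : ({v,c} : Finset (Fin n)) ⊆ s := by
    simp [Finset.insert_subset_iff, mv, mc]
  exact hF (hasCopy_of hC a u v b c h1 h2 h3 h4 h5 h6 h7 h8 h9 h10
    (hsub _ k1) (hsub _ k2) (hsub _ k3) (hsub _ k4))
/-- codegree of a pair among the triples of `E` -/
def dP {n : ℕ} (E : Finset (Finset (Fin n))) (p : Finset (Fin n)) : ℕ :=
  ((E.filter (fun t => t.card = 3)).filter (fun t => p ⊆ t)).card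

include hC hF in
lemma codeg_le2 {p : Finset (Fin n)} (hp : p.card = 2) : dP E p ≤ 2 := by
  by_contra hlt
  push_neg at hlt
  unfold dP at hlt
  obtain ⟨u, v, huv, rfl⟩ := Finset.card_eq_two.mp hp
  obtain ⟨S, hS, hS3⟩ := Finset.exists_subset_card_eq (by omega :
    3 ≤ ((E.filter (fun t => t.card = 3)).filter (fun t => ({u,v} : Finset (Fin n)) ⊆ t)).card)
  obtain ⟨t1, t2, t3, h12, h13, h23, rfl⟩ := Finset.card_eq_three.mp hS3
  have gett : ∀ t ∈ ({t1, t2, t3} : Finset (Finset (Fin n))),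
      ∃ x, x ∉ ({u,v} : Finset (Fin n)) ∧ t = insert x ({u,v} : Finset (Fin n)) ∧ t ∈ E := by
    intro t ht
    have := hS ht
    simp only [Finset.mem_filter] at this
    obtain ⟨⟨htE, ht3⟩, htp⟩ := this
    obtain ⟨x, hx1, hx2⟩ := third_vertex hp ht3 htp
    exact ⟨x, hx1, hx2, htE⟩
  obtain ⟨x1, hx1, e1, m1⟩ := gett t1 (by simp)
  obtain ⟨x2, hx2, e2, m2⟩ := gett t2 (by simp)
  obtain ⟨x3, hx3, e3, m3⟩ := gett t3 (by simp)
  simp only [Finset.mem_insert, Finset.mem_singleton, not_or] at hx1 hx2 hx3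
  have d12 : x1 ≠ x2 := fun h => h12 (by rw [e1, e2, h])
  have d13 : x1 ≠ x3 := fun h => h13 (by rw [e1, e3, h])
  have d23 : x2 ≠ x3 := fun h => h23 (by rw [e2, e3, h])
  have m1' : ({x1, u, v} : Finset (Fin n)) ∈ E := by rwa [e1] at m1
  have m2' : ({u, v, x2} : Finset (Fin n)) ∈ E := by
    have : ({u, v, x2} : Finset (Fin n)) = insert x2 {u, v} := by
      ext y; simp; tauto
    rwa [this, ← e2]
  have m3a : ({u, x3} : Finset (Fin n)) ∈ E := by
    refine hC t3 m3 _ ?_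
    rw [e3]; intro y hy
    simp only [Finset.mem_insert, Finset.mem_singleton] at hy ⊢; tauto
  have m3b : ({v, x3} : Finset (Fin n)) ∈ E := by
    refine hC t3 m3 _ ?_
    rw [e3]; intro y hy
    simp only [Finset.mem_insert, Finset.mem_singleton] at hy ⊢; tauto
  exact hF (hasCopy_of hC x1 u v x2 x3 hx1.1 hx1.2 d12 d13 huv
    (Ne.symm hx2.1) (Ne.symm hx3.1) (Ne.symm hx2.2) (Ne.symm hx3.2) d23 m1' m2' m3a m3b)

/-- neighborhood of a vertex in the graph of 2-edges -/
def NB {n : ℕ} (E : Finset (Finset (Fin n))) (u : Fin n) : Finset (Fin n) :=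
  Finset.univ.filter (fun w => w ≠ u ∧ ({u,w} : Finset (Fin n)) ∈ E)

/-- heavy pairs -/
def HS {n : ℕ} (E : Finset (Finset (Fin n))) : Finset (Finset (Fin n)) :=
  ((Finset.univ : Finset (Fin n)).powersetCard 2).filter (fun p => 2 ≤ dP E p)

lemma double_count {A B : Type*} [DecidableEq A] [DecidableEq B]
    (s : Finset A) (t : Finset B) (r : A → B → Prop) [∀ a b, Decidable (r a b)] :
    ∑ a ∈ s, (t.filter (fun b => r a b)).card = ∑ b ∈ t, (s.filter (fun a => r a b)).card := by
  simp only [Finset.card_filter]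
  exact Finset.sum_comm

include hC in
lemma heavy_two_triples {p : Finset (Fin n)} (hp : p ∈ HS E) :
    p.card = 2 ∧ p ∈ E ∧ ∃ a b : Fin n, a ≠ b ∧ a ∉ p ∧ b ∉ p ∧
      insert a p ∈ E ∧ insert b p ∈ E := by
  classical
  simp only [HS, Finset.mem_filter, Finset.mem_powersetCard] at hp
  obtain ⟨⟨-, hp2⟩, hd⟩ := hp
  unfold dP at hd
  obtain ⟨S, hS, hS2⟩ := Finset.exists_subset_card_eq hd
  obtain ⟨t1, t2, h12, rfl⟩ := Finset.card_eq_two.mp hS2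
  have g1 := hS (Finset.mem_insert_self t1 {t2})
  have g2 := hS (by simp : t2 ∈ ({t1, t2} : Finset (Finset (Fin n))))
  simp only [Finset.mem_filter] at g1 g2
  obtain ⟨a, ha, ea⟩ := third_vertex hp2 g1.1.2 g1.2
  obtain ⟨b, hb, eb⟩ := third_vertex hp2 g2.1.2 g2.2
  have hab : a ≠ b := fun h => h12 (by rw [ea, eb, h])
  exact ⟨hp2, hC t1 g1.1.1 p (ea ▸ Finset.subset_insert a p),
    a, b, hab, ha, hb, ea ▸ g1.1.1, eb ▸ g2.1.1⟩

include hC hF in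
lemma heavy_deg {u v : Fin n} (huv : u ≠ v) (hp : ({u,v} : Finset (Fin n)) ∈ HS E) :
    (NB E u).card + (NB E v).card ≤ n + 2 := by
  classical
  obtain ⟨hp2, hpE, a, b, hab, ha, hb, hta, htb⟩ := heavy_two_triples hC hp
  simp only [Finset.mem_insert, Finset.mem_singleton, not_or] at ha hb
  -- common neighborhood is contained in {a, b}
  have hcom : NB E u ∩ NB E v ⊆ ({a, b} : Finset (Fin n)) := by
    intro w hw
    simp only [NB, Finset.mem_inter, Finset.mem_filter] at hw
    obtain ⟨⟨-, hwu, hwuE⟩, ⟨-, hwv, hwvE⟩⟩ := hw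
    by_contra hwab
    simp only [Finset.mem_insert, Finset.mem_singleton, not_or] at hwab
    have m1 : ({a, u, v} : Finset (Fin n)) ∈ E := by
      have : ({a, u, v} : Finset (Fin n)) = insert a {u, v} := rfl
      rw [this]; exact hta
    have m2 : ({u, v, b} : Finset (Fin n)) ∈ E := by
      have : ({u, v, b} : Finset (Fin n)) = insert b {u, v} := by
        ext y; simp; tauto
      rw [this]; exact htb
    have m3 : ({u, w} : Finset (Fin n)) ∈ E := hwuE
    have m4 : ({v, w} : Finset (Fin n)) ∈ E := hwvE
    exact hF (hasCopy_of hC a u v b w ha.1 ha.2 hab (Ne.symm hwab.1) huv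
      (Ne.symm hb.1) (Ne.symm hwu) (Ne.symm hb.2) (Ne.symm hwv) (Ne.symm hwab.2)
      m1 m2 m3 m4)
  have h1 : (NB E u ∩ NB E v).card ≤ 2 := by
    calc (NB E u ∩ NB E v).card ≤ ({a, b} : Finset (Fin n)).card := Finset.card_le_card hcom
    _ ≤ 2 := Finset.card_insert_le a {b} |>.trans (by simp)
  have h2 : (NB E u ∪ NB E v).card ≤ n := by
    have := Finset.card_le_univ (NB E u ∪ NB E v)
    simpa using this
  have := Finset.card_union_add_card_inter (NB E u) (NB E v)
  omega

lemma pair_eq_image {u : Fin n} {p : Finset (Fin n)} (hp2 : p.card = 2) (hu : u ∈ p) :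
    ∃ w, w ≠ u ∧ p = {u, w} := by
  obtain ⟨x, y, hxy, rfl⟩ := Finset.card_eq_two.mp hp2
  simp only [Finset.mem_insert, Finset.mem_singleton] at hu
  rcases hu with rfl | rfl
  · exact ⟨y, Ne.symm hxy, rfl⟩
  · exact ⟨x, hxy, Finset.pair_comm x u⟩

/-- the 2-edges of `E` containing `u` are exactly the image of the neighborhood -/
lemma E2_filter_eq (u : Fin n) :
    (E.filter (fun p => p.card = 2)).filter (fun p => u ∈ p) =
      (NB E u).image (fun w => ({u, w} : Finset (Fin n))) := by
  classical
  ext p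
  simp only [Finset.mem_filter, Finset.mem_image, NB]
  constructor
  · rintro ⟨⟨hpE, hp2⟩, hu⟩
    obtain ⟨w, hwu, rfl⟩ := pair_eq_image hp2 hu
    exact ⟨w, by simp [hwu, hpE], rfl⟩
  · rintro ⟨w, hw, rfl⟩
    simp only [Finset.mem_filter, Finset.mem_univ, true_and] at hw
    refine ⟨⟨hw.2, ?_⟩, Finset.mem_insert_self u _⟩
    rw [Finset.card_insert_of_notMem (by simp [Ne.symm hw.1]), Finset.card_singleton]

lemma NB_card_eq (u : Fin n) :
    ((E.filter (fun p => p.card = 2)).filter (fun p => u ∈ p)).card = (NB E u).card := by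
  classical
  rw [E2_filter_eq]
  apply Finset.card_image_of_injOn
  intro w hw w' hw' h
  simp only [NB, Finset.mem_coe, Finset.mem_filter] at hw hw'
  have h' : ({u, w} : Finset (Fin n)) = {u, w'} := h
  have : w ∈ ({u, w'} : Finset (Fin n)) := h' ▸ Finset.mem_insert_of_mem (Finset.mem_singleton_self w)
  simp only [Finset.mem_insert, Finset.mem_singleton] at this
  tauto

lemma handshake : ∑ u : Fin n, (NB E u).card = 2 * (E.filter (fun p => p.card = 2)).card := by
  classical
  have h1 : ∑ u : Fin n, (NB E u).card
      = ∑ u : Fin n, ((E.filter (fun p => p.card = 2)).filter (fun p => u ∈ p)).card := by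
    exact Finset.sum_congr rfl (fun u _ => (NB_card_eq u).symm)
  rw [h1, double_count]
  have h2 : ∀ p ∈ E.filter (fun p => p.card = 2),
      (Finset.univ.filter (fun u : Fin n => u ∈ p)).card = 2 := by
    intro p hp
    simp only [Finset.mem_filter] at hp
    have : Finset.univ.filter (fun u => u ∈ p) = p := Finset.filter_univ_mem p
    rw [this, hp.2]
  rw [Finset.sum_congr rfl h2, Finset.sum_const, smul_eq_mul, mul_comm]

include hC in
lemma heavy_at_le (u : Fin n) :
    ((HS E).filter (fun p => u ∈ p)).card ≤ (NB E u).card := by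
  classical
  have hsub : (HS E).filter (fun p => u ∈ p) ⊆
      (NB E u).image (fun w => ({u, w} : Finset (Fin n))) := by
    intro p hp
    simp only [Finset.mem_filter] at hp
    obtain ⟨hpH, hu⟩ := hp
    obtain ⟨hp2, hpE, -⟩ := heavy_two_triples hC hpH
    obtain ⟨w, hwu, rfl⟩ := pair_eq_image hp2 hu
    simp only [Finset.mem_image, NB, Finset.mem_filter, Finset.mem_univ, true_and]
    exact ⟨w, ⟨hwu, hpE⟩, rfl⟩
  calc ((HS E).filter (fun p => u ∈ p)).card
      ≤ ((NB E u).image (fun w => ({u, w} : Finset (Fin n)))).card := Finset.card_le_card hsub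
    _ ≤ (NB E u).card := Finset.card_image_le

-- triple counting: 3 * e₃ ≤ m + h
include hC hF in
lemma count3 : 3 * (E.filter (fun t => t.card = 3)).card ≤
    (E.filter (fun p => p.card = 2)).card + (HS E).card := by
  classical
  set P2 := (Finset.univ : Finset (Fin n)).powersetCard 2 with hP2
  have key : ∑ p ∈ P2, dP E p = 3 * (E.filter (fun t => t.card = 3)).card := by
    unfold dP
    rw [double_count]
    have h2 : ∀ t ∈ E.filter (fun t => t.card = 3),
        (P2.filter (fun p => p ⊆ t)).card = 3 := by
      intro t ht
      simp only [Finset.mem_filter] at ht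
      have : P2.filter (fun p => p ⊆ t) = t.powersetCard 2 := by
        ext p
        simp only [hP2, Finset.mem_filter, Finset.mem_powersetCard]
        constructor
        · rintro ⟨⟨-, hp2⟩, hpt⟩; exact ⟨hpt, hp2⟩
        · rintro ⟨hpt, hp2⟩; exact ⟨⟨Finset.subset_univ p, hp2⟩, hpt⟩
      rw [this, Finset.card_powersetCard, ht.2]
      rfl
    rw [Finset.sum_congr rfl h2, Finset.sum_const, smul_eq_mul, mul_comm]
  have bound : ∀ p ∈ P2, dP E p ≤
      (if p ∈ E.filter (fun q => q.card = 2) then 1 else 0) + (if p ∈ HS E then 1 else 0) := by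
    intro p hp
    simp only [hP2, Finset.mem_powersetCard] at hp
    have hd2 : dP E p ≤ 2 := codeg_le2 hC hF hp.2
    by_cases h0 : dP E p = 0
    · simp [h0]
    · have hd1 : 1 ≤ dP E p := Nat.one_le_iff_ne_zero.mpr h0
      have hpE : p ∈ E.filter (fun q => q.card = 2) := by
        have : 0 < ((E.filter (fun t => t.card = 3)).filter (fun t => p ⊆ t)).card := hd1
        obtain ⟨t, ht⟩ := Finset.card_pos.mp this
        simp only [Finset.mem_filter] at ht
        exact Finset.mem_filter.mpr ⟨hC t ht.1.1 p ht.2, hp.2⟩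
      by_cases hH : p ∈ HS E
      · simp [hpE, hH]; omega
      · have : dP E p ≤ 1 := by
          by_contra hgt
          exact hH (Finset.mem_filter.mpr ⟨Finset.mem_powersetCard.mpr hp, by omega⟩)
        simp [hpE, hH]; omega
  calc 3 * (E.filter (fun t => t.card = 3)).card = ∑ p ∈ P2, dP E p := key.symm
    _ ≤ ∑ p ∈ P2, ((if p ∈ E.filter (fun q => q.card = 2) then 1 else 0)
        + (if p ∈ HS E then 1 else 0)) := Finset.sum_le_sum bound
    _ = (P2.filter (fun p => p ∈ E.filter (fun q => q.card = 2))).card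
        + (P2.filter (fun p => p ∈ HS E)).card := by
        rw [Finset.sum_add_distrib, Finset.card_filter, Finset.card_filter]
    _ ≤ (E.filter (fun p => p.card = 2)).card + (HS E).card :=
        Nat.add_le_add
          (Finset.card_le_card (fun p hp => (Finset.mem_filter.mp hp).2))
          (Finset.card_le_card (fun p hp => (Finset.mem_filter.mp hp).2))

include hC in
lemma pair_heavy_of_four {p S : Finset (Fin n)} (hS : S ∈ E) (hS4 : S.card = 4)
    (hp2 : p.card = 2) (hpS : p ⊆ S) : p ∈ HS E := by
  classical
  have hdiff : (S \ p).card = 2 := by rw [Finset.card_sdiff_of_subset hpS, hS4, hp2]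
  obtain ⟨x, y, hxy, hxyeq⟩ := Finset.card_eq_two.mp hdiff
  have hx : x ∈ S \ p := hxyeq ▸ Finset.mem_insert_self x {y}
  have hy : y ∈ S \ p := hxyeq ▸ Finset.mem_insert_of_mem (Finset.mem_singleton_self y)
  simp only [Finset.mem_sdiff] at hx hy
  have tx : insert x p ∈ E := hC S hS _ (Finset.insert_subset hx.1 hpS)
  have ty : insert y p ∈ E := hC S hS _ (Finset.insert_subset hy.1 hpS)
  have cx : (insert x p).card = 3 := by rw [Finset.card_insert_of_notMem hx.2, hp2]
  have cy : (insert y p).card = 3 := by rw [Finset.card_insert_of_notMem hy.2, hp2]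
  have hne : insert x p ≠ insert y p := by
    intro h
    have : x ∈ insert y p := h ▸ Finset.mem_insert_self x p
    simp only [Finset.mem_insert] at this
    rcases this with rfl | hxp
    · exact hxy rfl
    · exact hx.2 hxp
  refine Finset.mem_filter.mpr ⟨Finset.mem_powersetCard.mpr ⟨Finset.subset_univ p, hp2⟩, ?_⟩
  unfold dP
  have hsub : ({insert x p, insert y p} : Finset (Finset (Fin n))) ⊆
      (E.filter (fun t => t.card = 3)).filter (fun t => p ⊆ t) := by
    intro t ht
    simp only [Finset.mem_insert, Finset.mem_singleton] at ht
    rcases ht with rfl | rfl <;>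
      simp_all [Finset.mem_filter, Finset.subset_insert]
  calc 2 = ({insert x p, insert y p} : Finset (Finset (Fin n))).card := by
        rw [Finset.card_insert_of_notMem (by simpa using hne), Finset.card_singleton]
    _ ≤ _ := Finset.card_le_card hsub

include hC hF in
lemma four_unique {p : Finset (Fin n)} (hp2 : p.card = 2) :
    ((E.filter (fun S => S.card = 4)).filter (fun S => p ⊆ S)).card ≤ 1 := by
  classical
  by_contra hgt
  push_neg at hgt
  obtain ⟨T, hT, hT2⟩ := Finset.exists_subset_card_eq hgt
  obtain ⟨S, S', hSS', rfl⟩ := Finset.card_eq_two.mp hT2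
  have g1 := hT (Finset.mem_insert_self S {S'})
  have g2 := hT (by simp : S' ∈ ({S, S'} : Finset (Finset (Fin n))))
  simp only [Finset.mem_filter] at g1 g2
  obtain ⟨⟨hSE, hS4⟩, hpS⟩ := g1
  obtain ⟨⟨hS'E, hS'4⟩, hpS'⟩ := g2
  have hd1 : (S \ p).card = 2 := by rw [Finset.card_sdiff_of_subset hpS, hS4, hp2]
  have hd2 : (S' \ p).card = 2 := by rw [Finset.card_sdiff_of_subset hpS', hS'4, hp2]
  have hU : 3 ≤ ((S \ p) ∪ (S' \ p)).card := by
    by_contra hle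
    push_neg at hle
    have e1 : S \ p = (S \ p) ∪ (S' \ p) :=
      Finset.eq_of_subset_of_card_le Finset.subset_union_left (by omega)
    have e2 : S' \ p = (S \ p) ∪ (S' \ p) :=
      Finset.eq_of_subset_of_card_le Finset.subset_union_right (by omega)
    apply hSS'
    have hS : S = p ∪ (S \ p) := by rw [Finset.union_sdiff_of_subset hpS]
    have hS' : S' = p ∪ (S' \ p) := by rw [Finset.union_sdiff_of_subset hpS']
    rw [hS, hS', e1, ← e2]
  have himg : ((S \ p) ∪ (S' \ p)).image (fun x => insert x p) ⊆
      (E.filter (fun t => t.card = 3)).filter (fun t => p ⊆ t) := by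
    intro t ht
    simp only [Finset.mem_image, Finset.mem_union, Finset.mem_sdiff] at ht
    obtain ⟨x, hx, rfl⟩ := ht
    have hxp : x ∉ p := by rcases hx with h | h <;> exact h.2
    have hxE : insert x p ∈ E := by
      rcases hx with h | h
      · exact hC S hSE _ (Finset.insert_subset h.1 hpS)
      · exact hC S' hS'E _ (Finset.insert_subset h.1 hpS')
    simp only [Finset.mem_filter]
    exact ⟨⟨hxE, by rw [Finset.card_insert_of_notMem hxp, hp2]⟩, Finset.subset_insert x p⟩
  have hinj : Set.InjOn (fun x => insert x p) (((S \ p) ∪ (S' \ p) : Finset (Fin n)) : Set (Fin n)) := by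
    intro x hx y hy h
    simp only [Finset.mem_coe, Finset.mem_union, Finset.mem_sdiff] at hx hy
    have hxp : x ∉ p := by rcases hx with h' | h' <;> exact h'.2
    have hyp : y ∉ p := by rcases hy with h' | h' <;> exact h'.2
    have h' : insert x p = insert y p := h
    have : x ∈ insert y p := h' ▸ Finset.mem_insert_self x p
    simp only [Finset.mem_insert] at this
    tauto
  have hd : 3 ≤ dP E p := by
    unfold dP
    calc 3 ≤ ((S \ p) ∪ (S' \ p)).card := hU
      _ = (((S \ p) ∪ (S' \ p)).image (fun x => insert x p)).card :=
          (Finset.card_image_of_injOn hinj).symm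
      _ ≤ _ := Finset.card_le_card himg
  have := codeg_le2 hC hF hp2
  omega

include hC hF in
lemma count4 : 6 * (E.filter (fun S => S.card = 4)).card ≤ (HS E).card := by
  classical
  have key : ∑ S ∈ E.filter (fun S => S.card = 4), ((HS E).filter (fun p => p ⊆ S)).card
      = 6 * (E.filter (fun S => S.card = 4)).card := by
    have h6 : ∀ S ∈ E.filter (fun S => S.card = 4),
        ((HS E).filter (fun p => p ⊆ S)).card = 6 := by
      intro S hS
      simp only [Finset.mem_filter] at hS
      have : (HS E).filter (fun p => p ⊆ S) = S.powersetCard 2 := by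
        ext p
        simp only [Finset.mem_filter, Finset.mem_powersetCard]
        constructor
        · rintro ⟨hpH, hpS⟩
          exact ⟨hpS, (heavy_two_triples hC hpH).1⟩
        · rintro ⟨hpS, hp2⟩
          exact ⟨pair_heavy_of_four hC hS.1 hS.2 hp2 hpS, hpS⟩
      rw [this, Finset.card_powersetCard, hS.2]
      rfl
    rw [Finset.sum_congr rfl h6, Finset.sum_const, smul_eq_mul, mul_comm]
  have hdc : ∑ S ∈ E.filter (fun S => S.card = 4), ((HS E).filter (fun p => p ⊆ S)).card
      = ∑ p ∈ HS E, ((E.filter (fun S => S.card = 4)).filter (fun S => p ⊆ S)).card := by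
    exact double_count _ _ (fun (S : Finset (Fin n)) (p : Finset (Fin n)) => p ⊆ S)
  rw [← key, hdc]
  calc ∑ p ∈ HS E, ((E.filter (fun S => S.card = 4)).filter (fun S => p ⊆ S)).card
      ≤ ∑ _p ∈ HS E, 1 := Finset.sum_le_sum (fun p hp =>
        four_unique hC hF (heavy_two_triples hC hp).1)
    _ = (HS E).card := by simp

lemma two_choose_two (n : ℕ) : 2 * n.choose 2 = n * (n - 1) := by
  cases n with
  | zero => rfl
  | succ k =>
    rw [Nat.choose_two_right, Nat.succ_sub_one]
    have he : 2 ∣ (k + 1) * k := by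
      have := Nat.even_mul_succ_self k
      rw [mul_comm] at this
      exact this.two_dvd
    rw [Nat.mul_div_cancel' he]

include hC hF in
lemma heavy_global (hn : 13 ≤ n) :
    3 * (HS E).card + 8 * (E.filter (fun p => p.card = 2)).card ≤ 8 * n.choose 2 := by
  classical
  set m := (E.filter (fun p => p.card = 2)).card with hm
  set h := (HS E).card with hh
  set C := n.choose 2 with hc
  -- degrees
  have hA_le : ∀ u : Fin n, (NB E u).card ≤ n - 1 := by
    intro u
    have : NB E u ⊆ Finset.univ.erase u := by
      intro w hw
      simp only [NB, Finset.mem_filter] at hw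
      exact Finset.mem_erase.mpr ⟨hw.2.1, Finset.mem_univ w⟩
    calc (NB E u).card ≤ (Finset.univ.erase u).card := Finset.card_le_card this
      _ = n - 1 := by rw [Finset.card_erase_of_mem (Finset.mem_univ u), Finset.card_univ,
          Fintype.card_fin]
  -- ∑ t_u = 2h
  have hT_sum : ∑ u : Fin n, ((HS E).filter (fun p => u ∈ p)).card = 2 * h := by
    have := double_count (Finset.univ : Finset (Fin n)) (HS E) (fun u p => u ∈ p)
    rw [this]
    have h2 : ∀ p ∈ HS E, (Finset.univ.filter (fun u : Fin n => u ∈ p)).card = 2 := by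
      intro p hp
      rw [Finset.filter_univ_mem, (heavy_two_triples hC hp).1]
    rw [Finset.sum_congr rfl h2, Finset.sum_const, smul_eq_mul, mul_comm]
  -- ∑ a_u = 2m
  have hA_sum : ∑ u : Fin n, (NB E u).card = 2 * m := handshake
  -- weighted: ∑_u t_u * a_u ≤ (n+2) * h
  have hTA : ∑ u : Fin n, ((HS E).filter (fun p => u ∈ p)).card * (NB E u).card
      ≤ (n + 2) * h := by
    have step1 : ∀ u : Fin n, ((HS E).filter (fun p => u ∈ p)).card * (NB E u).card
        = ∑ p ∈ HS E, (if u ∈ p then (NB E u).card else 0) := by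
      intro u
      rw [← Finset.sum_filter, Finset.sum_const, smul_eq_mul]
    have step2 : ∑ u : Fin n, ((HS E).filter (fun p => u ∈ p)).card * (NB E u).card
        = ∑ p ∈ HS E, ∑ u ∈ p, (NB E u).card := by
      rw [Finset.sum_congr rfl (fun u _ => step1 u), Finset.sum_comm]
      refine Finset.sum_congr rfl (fun p _ => ?_)
      rw [← Finset.sum_filter, Finset.filter_univ_mem]
    rw [step2]
    have per : ∀ p ∈ HS E, ∑ u ∈ p, (NB E u).card ≤ n + 2 := by
      intro p hp
      obtain ⟨hp2, -, -⟩ := heavy_two_triples hC hp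
      obtain ⟨u, v, huv, rfl⟩ := Finset.card_eq_two.mp hp2
      rw [Finset.sum_pair huv]
      exact heavy_deg hC hF huv hp
    calc ∑ p ∈ HS E, ∑ u ∈ p, (NB E u).card ≤ ∑ _p ∈ HS E, (n + 2) :=
        Finset.sum_le_sum per
      _ = (HS E).card * (n + 2) := by rw [Finset.sum_const, smul_eq_mul]
      _ = (n + 2) * h := by rw [mul_comm, hh]
  -- now work in ℤ
  have hCC : (2 * C : ℤ) = (n : ℤ) * ((n : ℤ) - 1) := by
    have := two_choose_two n
    have h1 : ((n : ℤ) - 1) = ((n - 1 : ℕ) : ℤ) := by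
      have : 1 ≤ n := by omega
      push_cast [Nat.cast_sub this]
      ring
    rw [h1]
    exact_mod_cast this
  set A : Fin n → ℤ := fun u => ((NB E u).card : ℤ) with hA
  set T : Fin n → ℤ := fun u => (((HS E).filter (fun p => u ∈ p)).card : ℤ) with hT
  have hTa : ∀ u, T u ≤ A u := fun u => by
    simp only [hT, hA]; exact_mod_cast heavy_at_le hC u
  have hT0 : ∀ u, 0 ≤ T u := fun u => by positivity
  have hAn : ∀ u, A u ≤ (n : ℤ) - 1 := by
    intro u
    have := hA_le u
    have h1 : ((NB E u).card : ℤ) ≤ ((n - 1 : ℕ) : ℤ) := by exact_mod_cast this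
    calc A u ≤ ((n - 1 : ℕ) : ℤ) := h1
      _ ≤ (n : ℤ) - 1 := by
          have : 1 ≤ n := by omega
          omega
  have hsumT : ∑ u : Fin n, T u = 2 * (h : ℤ) := by
    simp only [hT]
    rw [← Nat.cast_sum, hT_sum]
    push_cast; ring
  have hsumA : ∑ u : Fin n, A u = 2 * (m : ℤ) := by
    simp only [hA]
    rw [← Nat.cast_sum, hA_sum]
    push_cast; ring
  have hsumTA : ∑ u : Fin n, T u * A u ≤ ((n : ℤ) + 2) * (h : ℤ) := by
    have heq : ∑ u : Fin n, T u * A u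
        = ((∑ u : Fin n, ((HS E).filter (fun p => u ∈ p)).card * (NB E u).card : ℕ) : ℤ) := by
      simp only [hT, hA]
      rw [Nat.cast_sum]
      push_cast
      rfl
    rw [heq]
    exact_mod_cast hTA
  -- the main computation
  have key : ((n : ℤ) - 4) * (h : ℤ) ≤ ((n : ℤ) - 1) * (2 * (C : ℤ) - 2 * (m : ℤ)) := by
    have e1 : (2 * (h : ℤ)) * ((n : ℤ) - 1) = ∑ u : Fin n, T u * ((n : ℤ) - 1) := by
      rw [← Finset.sum_mul, hsumT]
    have e2 : ∀ u, T u * ((n : ℤ) - 1) = T u * A u + T u * (((n : ℤ) - 1) - A u) := by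
      intro u; ring
    have e3 : ∀ u, T u * (((n : ℤ) - 1) - A u) ≤ A u * (((n : ℤ) - 1) - A u) := by
      intro u
      have := hAn u
      have := hTa u
      nlinarith [hT0 u]
    have e4 : ∀ u, A u * (((n : ℤ) - 1) - A u) ≤ ((n : ℤ) - 1) * (((n : ℤ) - 1) - A u) := by
      intro u
      have h1 := hAn u
      have h2 : (0 : ℤ) ≤ ((n : ℤ) - 1) - A u := by linarith
      have h3 : (0 : ℤ) ≤ A u := by rw [hA]; positivity
      nlinarith
    have e5 : ∑ u : Fin n, (((n : ℤ) - 1) - A u) = (n : ℤ) * ((n : ℤ) - 1) - 2 * (m : ℤ) := by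
      rw [Finset.sum_sub_distrib, hsumA, Finset.sum_const, Finset.card_univ, Fintype.card_fin,
        nsmul_eq_mul]
    have chain : (2 * (h : ℤ)) * ((n : ℤ) - 1)
        ≤ ((n : ℤ) + 2) * (h : ℤ) + ((n : ℤ) - 1) * ((n : ℤ) * ((n : ℤ) - 1) - 2 * (m : ℤ)) := by
      calc (2 * (h : ℤ)) * ((n : ℤ) - 1) = ∑ u : Fin n, T u * ((n : ℤ) - 1) := e1
        _ = ∑ u : Fin n, (T u * A u + T u * (((n : ℤ) - 1) - A u)) :=
            Finset.sum_congr rfl (fun u _ => e2 u)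
        _ = ∑ u : Fin n, T u * A u + ∑ u : Fin n, T u * (((n : ℤ) - 1) - A u) :=
            Finset.sum_add_distrib
        _ ≤ ((n : ℤ) + 2) * (h : ℤ) + ∑ u : Fin n, A u * (((n : ℤ) - 1) - A u) := by
            exact add_le_add hsumTA (Finset.sum_le_sum (fun u _ => e3 u))
        _ ≤ ((n : ℤ) + 2) * (h : ℤ) + ∑ u : Fin n, ((n : ℤ) - 1) * (((n : ℤ) - 1) - A u) := by
            exact add_le_add (le_refl _) (Finset.sum_le_sum (fun u _ => e4 u))
        _ = ((n : ℤ) + 2) * (h : ℤ) + ((n : ℤ) - 1) * ((n : ℤ) * ((n : ℤ) - 1) - 2 * (m : ℤ)) := by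
            rw [← Finset.mul_sum, e5]
    have : (n : ℤ) * ((n : ℤ) - 1) = 2 * (C : ℤ) := hCC.symm
    rw [this] at chain
    nlinarith [chain]
  -- conclude in ℕ
  have hmC : m ≤ C := by
    rw [hm, hc]
    calc (E.filter (fun p => p.card = 2)).card
        ≤ ((Finset.univ : Finset (Fin n)).powersetCard 2).card := by
          apply Finset.card_le_card
          intro p hp
          simp only [Finset.mem_filter] at hp
          exact Finset.mem_powersetCard.mpr ⟨Finset.subset_univ p, hp.2⟩
      _ = n.choose 2 := by rw [Finset.card_powersetCard, Finset.card_univ, Fintype.card_fin]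
  have hn' : (13 : ℤ) ≤ (n : ℤ) := by exact_mod_cast hn
  have hmC' : (m : ℤ) ≤ (C : ℤ) := by exact_mod_cast hmC
  have hh0 : (0 : ℤ) ≤ (h : ℤ) := by positivity
  have final : 3 * (h : ℤ) + 8 * (m : ℤ) ≤ 8 * (C : ℤ) := by nlinarith [key]
  exact_mod_cast final

include hC hF in
lemma upper (hn : 13 ≤ n) : 6 * E.card ≤ 8 * n.choose 2 + 6 * n + 6 := by
  classical
  have hdecomp : E.card = ∑ k ∈ Finset.range 5, (E.filter (fun e => e.card = k)).card := by
    apply Finset.card_eq_sum_card_fiberwise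
    intro e he
    simp only [Finset.mem_coe, Finset.mem_range]
    have := size_le4 hC hF e he
    omega
  have h0 : (E.filter (fun e => e.card = 0)).card ≤ 1 := by
    apply Finset.card_le_one.mpr
    intro a ha b hb
    simp only [Finset.mem_filter, Finset.card_eq_zero] at ha hb
    rw [ha.2, hb.2]
  have hk : ∀ k, (E.filter (fun e => e.card = k)).card ≤ n.choose k := by
    intro k
    calc (E.filter (fun e => e.card = k)).card
        ≤ ((Finset.univ : Finset (Fin n)).powersetCard k).card := by
          apply Finset.card_le_card
          intro p hp
          simp only [Finset.mem_filter] at hp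
          exact Finset.mem_powersetCard.mpr ⟨Finset.subset_univ p, hp.2⟩
      _ = n.choose k := by rw [Finset.card_powersetCard, Finset.card_univ, Fintype.card_fin]
  have h1 : (E.filter (fun e => e.card = 1)).card ≤ n := by
    have := hk 1
    simpa using this
  have h2 : (E.filter (fun e => e.card = 2)).card ≤ n.choose 2 := hk 2
  have h3 := count3 hC hF
  have h4 := count4 hC hF
  have h5 := heavy_global hC hF hn
  rw [hdecomp]
  rw [Finset.sum_range_succ, Finset.sum_range_succ, Finset.sum_range_succ,
    Finset.sum_range_succ, Finset.sum_range_one]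
  omega

end Upper

section Lower

variable (n : ℕ) [NeZero n]

/-- triples with zero sum -/
def TT : Finset (Finset (Fin n)) :=
  ((Finset.univ : Finset (Fin n)).powersetCard 3).filter (fun t => ∑ x ∈ t, x = 0)

/-- the lower-bound construction: everything of size ≤ 2 plus zero-sum triples -/
def Elow : Finset (Finset (Fin n)) :=
  ((Finset.univ : Finset (Fin n)).powerset.filter (fun s => s.card ≤ 2)) ∪ TT n

lemma Elow_complex : IsComplex (Elow n) := by
  intro e he f hf
  simp only [Elow, Finset.mem_union, Finset.mem_filter, Finset.mem_powerset] at he ⊢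
  rcases he with ⟨-, he2⟩ | heT
  · exact Or.inl ⟨Finset.subset_univ f, le_trans (Finset.card_le_card hf) he2⟩
  · by_cases hfe : f = e
    · exact Or.inr (hfe ▸ heT)
    · left
      refine ⟨Finset.subset_univ f, ?_⟩
      simp only [TT, Finset.mem_filter, Finset.mem_powersetCard] at heT
      have : f ⊂ e := Finset.ssubset_iff_subset_ne.mpr ⟨hf, hfe⟩
      have := Finset.card_lt_card this
      omega

lemma Elow_free : ¬ HasCopy F5 (Elow n) := by
  rintro ⟨f, hinj, hmap⟩
  have key : ∀ s : Finset (Fin 5), s ∈ F5 → s.card = 3 →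
      ∑ x ∈ s.image f, x = 0 := by
    intro s hs hs3
    have him := hmap s hs
    have hcard : (s.image f).card = 3 := by
      rw [Finset.card_image_of_injective s hinj, hs3]
    simp only [Elow, Finset.mem_union, Finset.mem_filter, Finset.mem_powerset] at him
    rcases him with ⟨-, hle⟩ | hT
    · omega
    · simp only [TT, Finset.mem_filter] at hT
      exact hT.2
  have h012 : ∑ x ∈ ({0,1,2} : Finset (Fin 5)).image f, x = 0 :=
    key _ mem_F5_012 (by decide)
  have h123 : ∑ x ∈ ({1,2,3} : Finset (Fin 5)).image f, x = 0 :=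
    key _ mem_F5_123 (by decide)
  have e1 : ∑ x ∈ ({0,1,2} : Finset (Fin 5)).image f, x = f 0 + f 1 + f 2 := by
    rw [Finset.sum_image (fun a _ b _ h => hinj h)]
    rw [show ({0,1,2} : Finset (Fin 5)) = insert 0 (insert 1 {2}) from rfl]
    rw [Finset.sum_insert (by decide), Finset.sum_insert (by decide), Finset.sum_singleton]
    abel
  have e2 : ∑ x ∈ ({1,2,3} : Finset (Fin 5)).image f, x = f 1 + f 2 + f 3 := by
    rw [Finset.sum_image (fun a _ b _ h => hinj h)]
    rw [show ({1,2,3} : Finset (Fin 5)) = insert 1 (insert 2 {3}) from rfl]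
    rw [Finset.sum_insert (by decide), Finset.sum_insert (by decide), Finset.sum_singleton]
    abel
  have : f 0 = f 3 := by
    have h1 : f 0 + f 1 + f 2 = 0 := e1 ▸ h012
    have h2 : f 1 + f 2 + f 3 = 0 := e2 ▸ h123
    have : f 0 + (f 1 + f 2) = f 3 + (f 1 + f 2) := by
      rw [← add_assoc, ← add_assoc, h1]
      rw [show f 3 + f 1 + f 2 = f 1 + f 2 + f 3 by abel, h2]
    exact add_right_cancel this
  exact absurd (hinj this) (by decide)

lemma TT_count : n.choose 2 ≤ 3 * (TT n).card + n := by
  classical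
  set P := ((Finset.univ : Finset (Fin n)).powersetCard 2).filter
    (fun p => -(∑ x ∈ p, x) ∉ p) with hP
  set g : Finset (Fin n) → Finset (Fin n) := fun p => insert (-(∑ x ∈ p, x)) p with hg
  -- the image of g on P lands in TT
  have himg : P.image g ⊆ TT n := by
    intro t ht
    simp only [Finset.mem_image] at ht
    obtain ⟨p, hp, rfl⟩ := ht
    simp only [hP, Finset.mem_filter, Finset.mem_powersetCard] at hp
    obtain ⟨⟨-, hp2⟩, hz⟩ := hp
    simp only [TT, Finset.mem_filter, Finset.mem_powersetCard, hg]
    refine ⟨⟨Finset.subset_univ _, ?_⟩, ?_⟩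
    · rw [Finset.card_insert_of_notMem hz, hp2]
    · rw [Finset.sum_insert hz]
      abel
  -- fibers of g have size at most 3
  have hfib : P.card ≤ 3 * (P.image g).card := by
    apply Finset.card_le_mul_card_image
    intro b hb
    simp only [Finset.mem_image] at hb
    obtain ⟨p0, hp0, rfl⟩ := hb
    simp only [hP, Finset.mem_filter, Finset.mem_powersetCard] at hp0
    have hb3 : (g p0).card = 3 := by
      rw [hg]
      simp only
      rw [Finset.card_insert_of_notMem hp0.2, hp0.1.2]
    have hsub : P.filter (fun a => g a = g p0) ⊆ (g p0).powersetCard 2 := by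
      intro p hp
      simp only [Finset.mem_filter, hP, Finset.mem_powersetCard] at hp
      obtain ⟨⟨⟨-, hp2⟩, -⟩, heq⟩ := hp
      refine Finset.mem_powersetCard.mpr ⟨?_, hp2⟩
      rw [← heq]
      exact Finset.subset_insert _ p
    calc (P.filter (fun a => g a = g p0)).card ≤ ((g p0).powersetCard 2).card :=
        Finset.card_le_card hsub
      _ = 3 := by
          rw [Finset.card_powersetCard, hb3]
          rfl
  -- the bad pairs are few
  have hbad : (((Finset.univ : Finset (Fin n)).powersetCard 2).filter
      (fun p => -(∑ x ∈ p, x) ∈ p)).card ≤ n := by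
    have hsub : ((Finset.univ : Finset (Fin n)).powersetCard 2).filter
        (fun p => -(∑ x ∈ p, x) ∈ p) ⊆
        (Finset.univ : Finset (Fin n)).image (fun x => ({x, -(x + x)} : Finset (Fin n))) := by
      intro p hp
      simp only [Finset.mem_filter, Finset.mem_powersetCard] at hp
      obtain ⟨⟨-, hp2⟩, hz⟩ := hp
      obtain ⟨w, hwz, hpw⟩ := pair_eq_image hp2 hz
      simp only [Finset.mem_image]
      refine ⟨-(∑ x ∈ p, x), Finset.mem_univ _, ?_⟩
      have hsum : ∑ x ∈ p, x = -(∑ x ∈ p, x) + w := by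
        conv_lhs => rw [hpw]
        rw [Finset.sum_pair (Ne.symm hwz)]
      have hw : w = -((-(∑ x ∈ p, x)) + (-(∑ x ∈ p, x))) := by
        have h2 : w = (∑ x ∈ p, x) + (∑ x ∈ p, x) := by
          have h3 := hsum
          have h4 : (∑ x ∈ p, x) + (∑ x ∈ p, x) = w := by
            calc (∑ x ∈ p, x) + (∑ x ∈ p, x)
                = (∑ x ∈ p, x) + (-(∑ x ∈ p, x) + w) := by rw [← h3]
              _ = w := by abel
          exact h4.symm
        rw [h2]; abel
      rw [← hw, ← hpw]
    calc _ ≤ ((Finset.univ : Finset (Fin n)).image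
          (fun x => ({x, -(x + x)} : Finset (Fin n)))).card := Finset.card_le_card hsub
      _ ≤ (Finset.univ : Finset (Fin n)).card := Finset.card_image_le
      _ = n := by rw [Finset.card_univ, Fintype.card_fin]
  have hsplit : P.card + (((Finset.univ : Finset (Fin n)).powersetCard 2).filter
      (fun p => -(∑ x ∈ p, x) ∈ p)).card = ((Finset.univ : Finset (Fin n)).powersetCard 2).card := by
    rw [hP, add_comm]
    have := Finset.card_filter_add_card_filter_not
      (s := ((Finset.univ : Finset (Fin n)).powersetCard 2)) (p := fun p => -(∑ x ∈ p, x) ∈ p)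
    convert this using 3
  have hP2card : ((Finset.univ : Finset (Fin n)).powersetCard 2).card = n.choose 2 := by
    rw [Finset.card_powersetCard, Finset.card_univ, Fintype.card_fin]
  have himgcard : (P.image g).card ≤ (TT n).card := Finset.card_le_card himg
  omega

lemma Elow_card : n.choose 2 + (TT n).card ≤ (Elow n).card := by
  classical
  have hdisj : Disjoint ((Finset.univ : Finset (Fin n)).powersetCard 2) (TT n) := by
    rw [Finset.disjoint_left]
    intro p hp hT
    simp only [Finset.mem_powersetCard] at hp
    simp only [TT, Finset.mem_filter, Finset.mem_powersetCard] at hT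
    omega
  have hsub : ((Finset.univ : Finset (Fin n)).powersetCard 2) ∪ TT n ⊆ Elow n := by
    apply Finset.union_subset
    · intro p hp
      simp only [Finset.mem_powersetCard] at hp
      simp only [Elow, Finset.mem_union, Finset.mem_filter, Finset.mem_powerset]
      exact Or.inl ⟨hp.1, le_of_eq hp.2⟩
    · intro t ht
      simp only [Elow, Finset.mem_union]
      exact Or.inr ht
  calc n.choose 2 + (TT n).card
      = (((Finset.univ : Finset (Fin n)).powersetCard 2) ∪ TT n).card := by
        rw [Finset.card_union_of_disjoint hdisj, Finset.card_powersetCard,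
          Finset.card_univ, Fintype.card_fin]
    _ ≤ (Elow n).card := Finset.card_le_card hsub

end Lower

theorem statement5 (ε : ℝ) (hε : 0 < ε) : ∃ n0 : ℕ, ∀ n : ℕ, n0 ≤ n →
    (4 / 3 - ε) * (n.choose 2 : ℝ) ≤ (exSC n F5 : ℝ) ∧
    (exSC n F5 : ℝ) ≤ (4 / 3 + ε) * (n.choose 2 : ℝ) := by
  classical
  refine ⟨max 13 (⌈(4 : ℝ) / ε⌉₊ + 2), fun n hn => ?_⟩
  have hn13 : 13 ≤ n := le_trans (le_max_left _ _) hn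
  have hnceil : ⌈(4 : ℝ) / ε⌉₊ + 2 ≤ n := le_trans (le_max_right _ _) hn
  haveI : NeZero n := ⟨by omega⟩
  set S : Set ℕ :=
    {m | ∃ E : Finset (Finset (Fin n)), IsComplex E ∧ ¬ HasCopy F5 E ∧ E.card = m} with hS
  have hexSC : exSC n F5 = sSup S := rfl
  have hmem : (Elow n).card ∈ S := ⟨Elow n, Elow_complex n, Elow_free n, rfl⟩
  have hub : ∀ m ∈ S, 6 * m ≤ 8 * n.choose 2 + 6 * n + 6 := by
    rintro m ⟨E, h1, h2, rfl⟩
    exact upper h1 h2 hn13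
  have hBdd : BddAbove S := ⟨8 * n.choose 2 + 6 * n + 6, fun m hm => by
    have := hub m hm; omega⟩
  have hlow : (Elow n).card ≤ exSC n F5 := by
    rw [hexSC]; exact le_csSup hBdd hmem
  have hhigh : 6 * exSC n F5 ≤ 8 * n.choose 2 + 6 * n + 6 := by
    have hmem2 : exSC n F5 ∈ S := by
      rw [hexSC]; exact Nat.sSup_mem ⟨_, hmem⟩ hBdd
    exact hub _ hmem2
  have hlow2 : 4 * n.choose 2 ≤ 3 * exSC n F5 + n := by
    have h1 := Elow_card n
    have h2 := TT_count n
    omega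
  -- pass to the reals
  have h2c : 2 * (n.choose 2 : ℝ) = (n : ℝ) * ((n : ℝ) - 1) := by
    have := two_choose_two n
    have hcast : ((n - 1 : ℕ) : ℝ) = (n : ℝ) - 1 := by
      have : 1 ≤ n := by omega
      push_cast [Nat.cast_sub this]
      ring
    rw [← hcast]
    exact_mod_cast this
  have hN13 : (13 : ℝ) ≤ (n : ℝ) := by exact_mod_cast hn13
  have heps : (4 : ℝ) ≤ ε * ((n : ℝ) - 1) := by
    have h1 : (4 : ℝ) / ε ≤ ⌈(4 : ℝ) / ε⌉₊ := Nat.le_ceil _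
    have h2 : (⌈(4 : ℝ) / ε⌉₊ : ℝ) ≤ (n : ℝ) - 1 := by
      have : (⌈(4 : ℝ) / ε⌉₊ + 1 : ℕ) ≤ n := by omega
      have := (Nat.cast_le (α := ℝ)).mpr this
      push_cast at this
      linarith
    have h3 : (4 : ℝ) / ε ≤ (n : ℝ) - 1 := le_trans h1 h2
    calc (4 : ℝ) = ε * ((4 : ℝ) / ε) := by field_simp
      _ ≤ ε * ((n : ℝ) - 1) := by
          apply mul_le_mul_of_nonneg_left h3 (le_of_lt hε)
  have hec : 4 * (n : ℝ) ≤ ε * (2 * (n.choose 2 : ℝ)) := by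
    rw [h2c]
    calc 4 * (n : ℝ) ≤ (ε * ((n : ℝ) - 1)) * (n : ℝ) := by nlinarith
      _ = ε * ((n : ℝ) * ((n : ℝ) - 1)) := by ring
  have hlowR : 4 * (n.choose 2 : ℝ) ≤ 3 * (exSC n F5 : ℝ) + (n : ℝ) := by
    exact_mod_cast hlow2
  have hhighR : 6 * (exSC n F5 : ℝ) ≤ 8 * (n.choose 2 : ℝ) + 6 * (n : ℝ) + 6 := by
    exact_mod_cast hhigh
  constructor
  · nlinarith [hlowR, hec, hN13]
  · nlinarith [hhighR, hec, hN13]
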